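/- arXiv:1809.03744 — 2 statements merged into one kernel-verified Lean document; each statement's English description precedes it below -/
import Mathlib

section
/- For every l ∈ ℤ^V one has χ(l ∨ 0) ≤ χ(l), where l ∨ 0 denotes the coordinatewise positive part of l. -/
/-- Cast an integer-valued lattice point into the rational vector space `V → ℚ`. -/
def toQ {V : Type*} (l : V → ℤ) : V → ℚ := fun v => (l v : ℚ)

/-!
Split `l = p + m` with `p = l ⊔ 0` and `m = l ⊓ 0`. Since `χ(x + y) = χ(x) + χ(y) - B(x, y)` and
`B(p, m) ≤ 0` (disjoint supports, nonnegative off-diagonal entries), it suffices to show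
`χ(m) ≥ 0` for every integral `m ≤ 0`. If `m ≠ 0`, then `B(m, m) = ∑ m_v B(m, e_v) < 0` yields a `v`
with `m_v < 0` and `B(m, e_v) > 0`, so `B(m, e_v) ≥ 1` by integrality. As `χ(e_v) = 1`, we get
`χ(m + e_v) = χ(m) + 1 - B(m, e_v) ≤ χ(m)`, and induction on `∑ |m_v|` descends to `χ(0) = 0`.
-/

open Finset

section Expansion

variable {R V : Type*} [Fintype V] [DecidableEq V]

lemma LinearMap.BilinForm.apply_eq_sum_left [CommSemiring R] (B : LinearMap.BilinForm R (V → R))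
    (x y : V → R) : B x y = ∑ v, x v * B (Pi.single v 1) y := by
  conv_lhs => rw [← univ_sum_single x]
  simp only [map_sum, LinearMap.sum_apply]
  refine sum_congr rfl fun v _ => ?_
  rw [← smul_eq_mul, ← LinearMap.smul_apply, ← map_smul, ← Pi.single_smul', smul_eq_mul, mul_one]

lemma LinearMap.BilinForm.apply_eq_sum_right [CommSemiring R] (B : LinearMap.BilinForm R (V → R))
    (x y : V → R) : B x y = ∑ w, y w * B x (Pi.single w 1) := by
  conv_lhs => rw [← univ_sum_single y]
  simp only [map_sum]
  refine sum_congr rfl fun w _ => ?_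
  rw [← smul_eq_mul, ← map_smul, ← Pi.single_smul', smul_eq_mul, mul_one]

lemma LinearMap.BilinForm.apply_nonpos_of_disjoint_support [CommRing R] [PartialOrder R]
    [IsOrderedRing R] (B : LinearMap.BilinForm R (V → R))
    (hoff : ∀ v w : V, v ≠ w → 0 ≤ B (Pi.single v 1) (Pi.single w 1))
    {x y : V → R} (hx : 0 ≤ x) (hy : y ≤ 0) (hxy : ∀ v, x v * y v = 0) : B x y ≤ 0 := by
  rw [B.apply_eq_sum_left]
  refine sum_nonpos fun v _ => ?_
  rw [B.apply_eq_sum_right, mul_sum]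
  refine sum_nonpos fun w _ => ?_
  obtain rfl | hvw := eq_or_ne v w
  · rw [← mul_assoc, hxy, zero_mul]
  · exact mul_nonpos_of_nonneg_of_nonpos (hx v)
      (mul_nonpos_of_nonpos_of_nonneg (hy w) (hoff v w hvw))

lemma LinearMap.BilinForm.exists_neg_apply_and_pos_of_apply_self_neg [CommRing R]
    [LinearOrder R] [IsStrictOrderedRing R] (B : LinearMap.BilinForm R (V → R)) {x : V → R}
    (hx : x ≤ 0) (hxx : B x x < 0) : ∃ v, x v < 0 ∧ 0 < B x (Pi.single v 1) := by
  rw [B.apply_eq_sum_right] at hxx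
  obtain ⟨v, -, hv⟩ := exists_lt_of_sum_lt (hxx.trans_eq sum_const_zero.symm)
  have hpos := pos_of_mul_neg_right hv (hx v)
  exact ⟨v, Left.neg_of_mul_neg_left hv hpos.le, hpos⟩

end Expansion

namespace LinearMap.BilinForm

variable {M : Type*} [AddCommGroup M] [Module ℚ M] (B : LinearMap.BilinForm ℚ M) (Z : M)

def chi (x : M) : ℚ := -(B x (x - Z)) / 2

@[simp]
lemma chi_zero : B.chi Z 0 = 0 := by simp [chi]

variable {B}

lemma chi_add (hB : B.IsSymm) (x y : M) : B.chi Z (x + y) = B.chi Z x + B.chi Z y - B x y := by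
  simp only [chi, map_add, map_sub, LinearMap.add_apply, hB.eq y x]
  ring

lemma chi_eq_one (hB : B.IsSymm) {e : M} (he : B Z e = B e e + 2) : B.chi Z e = 1 := by
  simp only [chi, map_sub, hB.eq e Z, he]
  ring

end LinearMap.BilinForm

section Lattice

variable {V : Type*}

lemma toQ_add (l m : V → ℤ) : toQ (l + m) = toQ l + toQ m := by
  ext v
  simp [toQ]

lemma toQ_zero : toQ (0 : V → ℤ) = 0 := by
  ext v
  simp [toQ]

lemma toQ_injective : Function.Injective (toQ (V := V)) :=
  Int.cast_injective.comp_left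

lemma toQ_nonneg {l : V → ℤ} (hl : 0 ≤ l) : 0 ≤ toQ l := fun v => Int.cast_nonneg_iff.mpr (hl v)

lemma toQ_nonpos {l : V → ℤ} (hl : l ≤ 0) : toQ l ≤ 0 := fun v => Int.cast_nonpos.mpr (hl v)

variable [DecidableEq V]

lemma toQ_single (v : V) : toQ (Pi.single v 1) = Pi.single v 1 := by
  ext w
  obtain rfl | hwv := eq_or_ne w v <;> simp [toQ, *]

lemma sum_natAbs_add_single_lt [Fintype V] {m : V → ℤ} {v : V} (hv : m v < 0) :
    ∑ w, ((m + Pi.single v 1 : V → ℤ) w).natAbs < ∑ w, (m w).natAbs := by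
  refine sum_lt_sum (fun w _ => ?_) ⟨v, mem_univ v, by simp; omega⟩
  obtain rfl | hwv := eq_or_ne w v
  · simp only [Pi.add_apply, Pi.single_eq_same]
    omega
  · simp [hwv]

variable [Fintype V] {B : LinearMap.BilinForm ℚ (V → ℚ)}

lemma exists_int_eq_apply_single
    (hint : ∀ v w : V, ∃ n : ℤ, B (Pi.single v 1) (Pi.single w 1) = (n : ℚ)) (l : V → ℤ) (v : V) :
    ∃ n : ℤ, B (toQ l) (Pi.single v 1) = n := by
  choose n hn using hint
  refine ⟨∑ w, l w * n w v, ?_⟩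
  rw [B.apply_eq_sum_left]
  push_cast
  exact sum_congr rfl fun w _ => by rw [hn]; rfl

lemma chi_nonneg_of_nonpos (hB : B.IsSymm)
    (hint : ∀ v w : V, ∃ n : ℤ, B (Pi.single v 1) (Pi.single w 1) = (n : ℚ))
    (hneg : ∀ x : V → ℚ, x ≠ 0 → B x x < 0) {ZK : V → ℚ}
    (hZK : ∀ v : V, B ZK (Pi.single v 1) = B (Pi.single v 1) (Pi.single v 1) + 2)
    {m : V → ℤ} (hm : m ≤ 0) : 0 ≤ B.chi ZK (toQ m) := by
  induction hN : ∑ v, (m v).natAbs using Nat.strong_induction_on generalizing m with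
  | _ N ih =>
  obtain rfl | hm0 := eq_or_ne m 0
  · simp [toQ_zero]
  obtain ⟨v, hmvQ, hpos⟩ := B.exists_neg_apply_and_pos_of_apply_self_neg (toQ_nonpos hm)
    (hneg _ ((toQ_injective.ne_iff' toQ_zero).mpr hm0))
  obtain ⟨n, hn⟩ := exists_int_eq_apply_single hint m v
  have hone : 1 ≤ B (toQ m) (Pi.single v 1) := by
    rw [hn] at hpos ⊢
    exact_mod_cast hpos
  have hmv : m v < 0 := Int.cast_lt_zero.mp hmvQ
  have hstep : B.chi ZK (toQ (m + Pi.single v 1)) ≤ B.chi ZK (toQ m) := by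
    rw [toQ_add, toQ_single, B.chi_add ZK hB, B.chi_eq_one ZK hB (hZK v)]
    linarith
  have hm' : m + Pi.single v 1 ≤ 0 := by
    intro w
    obtain rfl | hwv := eq_or_ne w v
    · simp only [Pi.add_apply, Pi.single_eq_same, Pi.zero_apply]
      omega
    · simpa [hwv] using hm w
  exact (ih _ (hN ▸ sum_natAbs_add_single_lt hmv) hm' rfl).trans hstep

end Lattice

theorem chi_positive_part_le_general
    {V : Type*} [Fintype V] [DecidableEq V]
    (B : LinearMap.BilinForm ℚ (V → ℚ))
    (hsymm : ∀ x y : V → ℚ, B x y = B y x)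
    (hint : ∀ v w : V, ∃ n : ℤ, B (Pi.single v 1) (Pi.single w 1) = (n : ℚ))
    (hoff : ∀ v w : V, v ≠ w → 0 ≤ B (Pi.single v 1) (Pi.single w 1))
    (hneg : ∀ x : V → ℚ, x ≠ 0 → B x x < 0)
    (ZK : V → ℚ)
    (hZK : ∀ v : V, B ZK (Pi.single v 1) = B (Pi.single v 1) (Pi.single v 1) + 2)
    (χ : (V → ℚ) → ℚ)
    (hχ : ∀ x : V → ℚ, χ x = -(B x (x - ZK)) / 2) :
    ∀ l : V → ℤ, χ (toQ (l ⊔ 0)) ≤ χ (toQ l) := by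
  intro l
  have hB : B.IsSymm := ⟨hsymm⟩
  obtain rfl : χ = B.chi ZK := funext hχ
  have hsplit : toQ l = toQ (l ⊔ 0) + toQ (l ⊓ 0) := by
    rw [← toQ_add, add_comm, inf_add_sup, add_zero]
  have hcross : B (toQ (l ⊔ 0)) (toQ (l ⊓ 0)) ≤ 0 :=
    B.apply_nonpos_of_disjoint_support hoff (toQ_nonneg le_sup_right) (toQ_nonpos inf_le_right)
      fun v => by
        rw [toQ, toQ, ← Int.cast_mul, Int.cast_eq_zero]
        rcases le_total (l v) 0 with h | h <;> simp [h]
  have hnegPart : 0 ≤ B.chi ZK (toQ (l ⊓ 0)) := chi_nonneg_of_nonpos hB hint hneg hZK inf_le_right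
  rw [hsplit, B.chi_add ZK hB]
  linarith

/-- For every `l ∈ ℤ^V` one has `χ(l ∨ 0) ≤ χ(l)`, where `l ∨ 0`
is the coordinatewise positive part of `l`. -/
theorem chi_positive_part_le
    {V : Type*} [Fintype V] [Nonempty V] [DecidableEq V]
    (B : LinearMap.BilinForm ℚ (V → ℚ))
    (hsymm : ∀ x y : V → ℚ, B x y = B y x)
    (hint : ∀ v w : V, ∃ n : ℤ, B (Pi.single v 1) (Pi.single w 1) = (n : ℚ))
    (hoff : ∀ v w : V, v ≠ w → 0 ≤ B (Pi.single v 1) (Pi.single w 1))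
    (hneg : ∀ x : V → ℚ, x ≠ 0 → B x x < 0)
    (ZK : V → ℚ)
    (hZK : ∀ v : V, B ZK (Pi.single v 1) = B (Pi.single v 1) (Pi.single v 1) + 2)
    (χ : (V → ℚ) → ℚ)
    (hχ : ∀ x : V → ℚ, χ x = -(B x (x - ZK)) / 2) :
    ∀ l : V → ℤ, χ (toQ (l ⊔ 0)) ≤ χ (toQ l) :=
  chi_positive_part_le_general B hsymm hint hoff hneg ZK hZK χ hχ
end

section
/- Let w ∈ V, let l′ ∈ ℚ^V with B(l′, e_w) ≤ −1, and let Z ∈ ℤ^V with Z ≥ 0 and Z_w ≥ 1. Then the minimum of χ(−l′ + l) over {l ∈ ℤ^V : 0 ≤ l ≤ Z} equals the minimum of χ(−l′ + l) over {l ∈ ℤ^V : e_w ≤ l ≤ Z} (both sets are finite and nonempty). -/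
open Set

lemma toQ_add_single {V : Type*} [DecidableEq V] (l : V → ℤ) (w : V) :
    toQ (l + Pi.single w 1) = toQ l + Pi.single w 1 := by
  ext v
  rcases eq_or_ne v w with rfl | hv <;> simp [toQ, *]

theorem exists_isLeast_image_of_forall_exists_le {α β : Type*} [LinearOrder β] {f : α → β}
    {S T : Set α} (hTS : T ⊆ S) (hT : T.Finite) (hTne : T.Nonempty)
    (h : ∀ s ∈ S, ∃ t ∈ T, f t ≤ f s) :
    ∃ μ, IsLeast (f '' S) μ ∧ IsLeast (f '' T) μ := by
  obtain ⟨t₀, ht₀, hmin⟩ := T.exists_min_image f hT hTne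
  refine ⟨f t₀, ⟨mem_image_of_mem f (hTS ht₀), ?_⟩, ⟨mem_image_of_mem f ht₀, ?_⟩⟩
  · rintro _ ⟨s, hs, rfl⟩
    obtain ⟨t, ht, hts⟩ := h s hs
    exact (hmin t ht).trans hts
  · rintro _ ⟨t, ht, rfl⟩
    exact hmin t ht

section Box

variable {V : Type*} [DecidableEq V] {w : V} {l Z : V → ℤ}

lemma single_one_le_of_nonneg (hl : 0 ≤ l) (hlw : 1 ≤ l w) : Pi.single w 1 ≤ l := by
  intro v
  rcases eq_or_ne v w with rfl | hv
  · simpa using hlw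
  · simpa [hv] using hl v

lemma add_single_one_mem_Icc (hl : l ∈ Icc 0 Z) (hlw : l w = 0) (hZw : 1 ≤ Z w) :
    l + Pi.single w 1 ∈ Icc (Pi.single w 1) Z := by
  refine ⟨le_add_of_nonneg_left hl.1, fun v => ?_⟩
  rcases eq_or_ne v w with rfl | hv <;> simp [*, hl.2 v]

end Box

section RiemannRoch

variable {M : Type*} [AddCommGroup M] [Module ℚ M] (B : LinearMap.BilinForm ℚ M) (ZK : M)

def riemannRochChi (x : M) : ℚ := -(B x (x - ZK)) / 2

variable {B ZK}

lemma riemannRochChi_add {x e : M} (hex : B e x = B x e) (hZK : B e ZK = B e e + 2) :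
    riemannRochChi B ZK (x + e) = riemannRochChi B ZK x + 1 - B x e := by
  simp only [riemannRochChi, map_add, map_sub, LinearMap.add_apply, hex, hZK]
  ring

end RiemannRoch

lemma apply_single_nonneg_of_nonneg {V K : Type*} [Fintype V] [DecidableEq V] [Field K]
    [LinearOrder K] [IsStrictOrderedRing K] {B : LinearMap.BilinForm K (V → K)}
    (hoff : ∀ v w : V, v ≠ w → 0 ≤ B (Pi.single v 1) (Pi.single w 1))
    {x : V → K} {w : V} (hx : 0 ≤ x) (hxw : x w = 0) : 0 ≤ B x (Pi.single w 1) := by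
  rw [pi_eq_sum_univ' x]
  simp only [map_sum, map_smul, LinearMap.sum_apply, LinearMap.smul_apply, smul_eq_mul]
  refine Finset.sum_nonneg fun v _ => ?_
  rcases eq_or_ne v w with rfl | hv
  · simp [hxw]
  · exact mul_nonneg (hx v) (hoff v w hv)

lemma riemannRochChi_add_single_le {V : Type*} [Fintype V] [DecidableEq V]
    {B : LinearMap.BilinForm ℚ (V → ℚ)} {ZK : V → ℚ} (hsymm : ∀ x y : V → ℚ, B x y = B y x)
    (hoff : ∀ v w : V, v ≠ w → 0 ≤ B (Pi.single v 1) (Pi.single w 1)) {w : V}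
    (hZK : B ZK (Pi.single w 1) = B (Pi.single w 1) (Pi.single w 1) + 2)
    {l' : V → ℚ} (hl' : B l' (Pi.single w 1) ≤ -1) {l : V → ℤ} (hl : 0 ≤ l) (hlw : l w = 0) :
    riemannRochChi B ZK (-l' + toQ (l + Pi.single w 1)) ≤ riemannRochChi B ZK (-l' + toQ l) := by
  have hl_pair : 0 ≤ B (toQ l) (Pi.single w 1) :=
    apply_single_nonneg_of_nonneg hoff (fun v => Int.cast_nonneg (hl v)) (by simp [toQ, hlw])
  rw [toQ_add_single, ← add_assoc, riemannRochChi_add (hsymm _ _) (by rw [hsymm, hZK])]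
  simp only [map_add, map_neg, LinearMap.add_apply, LinearMap.neg_apply]
  linarith

theorem chi_min_laufer_step_general
    {V : Type*} [Fintype V] [DecidableEq V]
    (B : LinearMap.BilinForm ℚ (V → ℚ))
    (hsymm : ∀ x y : V → ℚ, B x y = B y x)
    (hoff : ∀ v w : V, v ≠ w → 0 ≤ B (Pi.single v 1) (Pi.single w 1))
    (ZK : V → ℚ)
    (hZK : ∀ v : V, B ZK (Pi.single v 1) = B (Pi.single v 1) (Pi.single v 1) + 2)
    (χ : (V → ℚ) → ℚ)
    (hχ : ∀ x : V → ℚ, χ x = -(B x (x - ZK)) / 2)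
    (w : V) (l' : V → ℚ) (hl' : B l' (Pi.single w 1) ≤ -1)
    (Z : V → ℤ) (hZ : 0 ≤ Z) (hZw : 1 ≤ Z w) :
    {l : V → ℤ | 0 ≤ l ∧ l ≤ Z}.Finite ∧
    {l : V → ℤ | Pi.single w 1 ≤ l ∧ l ≤ Z}.Finite ∧
    {l : V → ℤ | 0 ≤ l ∧ l ≤ Z}.Nonempty ∧
    {l : V → ℤ | Pi.single w 1 ≤ l ∧ l ≤ Z}.Nonempty ∧
    ∃ μ : ℚ,
      IsLeast ((fun l : V → ℤ => χ (-l' + toQ l)) '' {l | 0 ≤ l ∧ l ≤ Z}) μ ∧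
      IsLeast ((fun l : V → ℤ => χ (-l' + toQ l)) '' {l | Pi.single w 1 ≤ l ∧ l ≤ Z}) μ := by
  obtain rfl : χ = riemannRochChi B ZK := funext hχ
  have hsingle : Pi.single w 1 ∈ Icc (Pi.single w 1) Z :=
    ⟨le_rfl, single_one_le_of_nonneg hZ hZw⟩
  have hsub : Icc (Pi.single w 1) Z ⊆ Icc 0 Z :=
    Icc_subset_Icc_left (Pi.single_nonneg.2 zero_le_one)
  refine ⟨finite_Icc 0 Z, finite_Icc _ Z, ⟨0, le_rfl, hZ⟩, ⟨_, hsingle⟩,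
    exists_isLeast_image_of_forall_exists_le hsub (finite_Icc _ Z) ⟨_, hsingle⟩ ?_⟩
  intro l hl
  rcases (hl.1 w).eq_or_lt with hlw | hlw_pos
  · exact ⟨_, add_single_one_mem_Icc hl hlw.symm hZw,
      riemannRochChi_add_single_le hsymm hoff (hZK w) hl' hl.1 hlw.symm⟩
  · exact ⟨l, ⟨single_one_le_of_nonneg hl.1 hlw_pos, hl.2⟩, le_rfl⟩

/-- Let `w ∈ V`, `l′ ∈ ℚ^V` with `B(l′, e_w) ≤ −1`, and `Z ∈ ℤ^V`
with `Z ≥ 0`, `Z_w ≥ 1`.  Then the minimum of `χ(−l′ + l)` over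
`{0 ≤ l ≤ Z}` equals the minimum over `{e_w ≤ l ≤ Z}` (both sets are finite and
nonempty). -/
theorem chi_min_laufer_step
    {V : Type*} [Fintype V] [Nonempty V] [DecidableEq V]
    (B : LinearMap.BilinForm ℚ (V → ℚ))
    (hsymm : ∀ x y : V → ℚ, B x y = B y x)
    (hoff : ∀ v w : V, v ≠ w → 0 ≤ B (Pi.single v 1) (Pi.single w 1))
    (ZK : V → ℚ)
    (hZK : ∀ v : V, B ZK (Pi.single v 1) = B (Pi.single v 1) (Pi.single v 1) + 2)
    (χ : (V → ℚ) → ℚ)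
    (hχ : ∀ x : V → ℚ, χ x = -(B x (x - ZK)) / 2)
    (w : V) (l' : V → ℚ) (hl' : B l' (Pi.single w 1) ≤ -1)
    (Z : V → ℤ) (hZ : 0 ≤ Z) (hZw : 1 ≤ Z w) :
    {l : V → ℤ | 0 ≤ l ∧ l ≤ Z}.Finite ∧
    {l : V → ℤ | Pi.single w 1 ≤ l ∧ l ≤ Z}.Finite ∧
    {l : V → ℤ | 0 ≤ l ∧ l ≤ Z}.Nonempty ∧
    {l : V → ℤ | Pi.single w 1 ≤ l ∧ l ≤ Z}.Nonempty ∧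
    ∃ μ : ℚ,
      IsLeast ((fun l : V → ℤ => χ (-l' + toQ l)) '' {l | 0 ≤ l ∧ l ≤ Z}) μ ∧
      IsLeast ((fun l : V → ℤ => χ (-l' + toQ l)) '' {l | Pi.single w 1 ≤ l ∧ l ≤ Z}) μ :=
  chi_min_laufer_step_general B hsymm hoff ZK hZK χ hχ w l' hl' Z hZ hZw
end
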